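/- arXiv:1305.3490 — 8 statements merged into one kernel-verified Lean document; each statement's English description precedes it below -/
import Mathlib

section
/- Let 0 < λ < μ. The real quadratic polynomial D(s) = (μ² - λμ/2 + (μ-λ)s)² + 2λμ·s·(μ+s) satisfies: ζ⁻ ≤ ζ⁺ < 0, D(ζ⁻) = D(ζ⁺) = 0, D(s) > 0 for every real s with s < ζ⁻ or s > ζ⁺, and D(s) ≤ 0 for every real s with ζ⁻ ≤ s ≤ ζ⁺. -/
noncomputable section

/-- The quadratic discriminant `D(s)` of the key quadratic equation in the symmetric SQF model. -/
def Dq (lam mu s : ℝ) : ℝ :=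
  (mu ^ 2 - lam * mu / 2 + (mu - lam) * s) ^ 2 + 2 * lam * mu * s * (mu + s)

/-- The ramification point `ζ⁻`. -/
def zetaMinus (lam mu : ℝ) : ℝ :=
  -mu * (Real.sqrt mu + Real.sqrt (lam / 2)) ^ 2 /
    (lam / 2 + (Real.sqrt mu + Real.sqrt (lam / 2)) ^ 2)

/-- The ramification point `ζ⁺`. -/
def zetaPlus (lam mu : ℝ) : ℝ :=
  -mu * (Real.sqrt mu - Real.sqrt (lam / 2)) ^ 2 /
    (lam / 2 + (Real.sqrt mu - Real.sqrt (lam / 2)) ^ 2)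

lemma Dq_factor (lam mu : ℝ) (hlam : 0 < lam) (hmu : lam < mu) (s : ℝ) :
    Dq lam mu s = (lam ^ 2 + mu ^ 2) * (s - zetaMinus lam mu) * (s - zetaPlus lam mu) := by
  have hmu0 : 0 < mu := hlam.trans hmu
  set a := Real.sqrt mu with ha'
  set b := Real.sqrt (lam / 2) with hb'
  have ha : a ^ 2 = mu := Real.sq_sqrt hmu0.le
  have hb : b ^ 2 = lam / 2 := Real.sq_sqrt (by linarith)
  have hbpos : 0 < b := Real.sqrt_pos.mpr (by linarith)
  have hapos : 0 < a := Real.sqrt_pos.mpr hmu0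
  have hd1 : b ^ 2 + (a + b) ^ 2 ≠ 0 := by positivity
  have hd2 : b ^ 2 + (a - b) ^ 2 ≠ 0 := by
    have : 0 < b ^ 2 + (a - b) ^ 2 := by positivity
    linarith
  have hlam2 : lam = 2 * b ^ 2 := by rw [hb]; ring
  have hmu2 : mu = a ^ 2 := ha.symm
  unfold Dq zetaMinus zetaPlus
  rw [← ha', ← hb']
  rw [hlam2, hmu2]
  have e1 : 2 * b ^ 2 / 2 = b ^ 2 := by ring
  rw [e1]
  field_simp
  ring

theorem stmt_0 (lam mu : ℝ) (hlam : 0 < lam) (hmu : lam < mu) :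
    zetaMinus lam mu ≤ zetaPlus lam mu ∧
    zetaPlus lam mu < 0 ∧
    Dq lam mu (zetaMinus lam mu) = 0 ∧
    Dq lam mu (zetaPlus lam mu) = 0 ∧
    (∀ s : ℝ, s < zetaMinus lam mu ∨ zetaPlus lam mu < s → 0 < Dq lam mu s) ∧
    (∀ s : ℝ, zetaMinus lam mu ≤ s → s ≤ zetaPlus lam mu → Dq lam mu s ≤ 0) := by
  have hmu0 : 0 < mu := hlam.trans hmu
  obtain ⟨a, b, hapos, hbpos, ha, hb, hzm, hzp⟩ :
      ∃ a b : ℝ, 0 < a ∧ 0 < b ∧ a ^ 2 = mu ∧ b ^ 2 = lam / 2 ∧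
        zetaMinus lam mu = -mu * (a + b) ^ 2 / (b ^ 2 + (a + b) ^ 2) ∧
        zetaPlus lam mu = -mu * (a - b) ^ 2 / (b ^ 2 + (a - b) ^ 2) := by
    refine ⟨Real.sqrt mu, Real.sqrt (lam / 2), Real.sqrt_pos.mpr hmu0,
      Real.sqrt_pos.mpr (by linarith), Real.sq_sqrt hmu0.le,
      Real.sq_sqrt (by linarith), ?_, ?_⟩
    · unfold zetaMinus; rw [Real.sq_sqrt (show (0:ℝ) ≤ lam / 2 by linarith)]
    · unfold zetaPlus; rw [Real.sq_sqrt (show (0:ℝ) ≤ lam / 2 by linarith)]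
  have hab : b < a := by nlinarith
  have hd1 : 0 < b ^ 2 + (a + b) ^ 2 := by positivity
  have hd2 : 0 < b ^ 2 + (a - b) ^ 2 := by positivity
  have hle : zetaMinus lam mu ≤ zetaPlus lam mu := by
    rw [hzm, hzp, div_le_div_iff₀ hd1 hd2]
    nlinarith [mul_pos hmu0 (mul_pos hapos (mul_pos hbpos (mul_pos hbpos hbpos)))]
  have hneg : zetaPlus lam mu < 0 := by
    rw [hzp]
    apply div_neg_of_neg_of_pos _ hd2
    have h1 : 0 < (a - b) ^ 2 := pow_pos (sub_pos.mpr hab) 2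
    nlinarith
  have hlt : (0:ℝ) < lam ^ 2 + mu ^ 2 := by positivity
  refine ⟨hle, hneg, ?_, ?_, ?_, ?_⟩
  · rw [Dq_factor lam mu hlam hmu]; ring
  · rw [Dq_factor lam mu hlam hmu]; ring
  · intro s hs
    rw [Dq_factor lam mu hlam hmu]
    rcases hs with h | h
    · have h2 : s < zetaPlus lam mu := lt_of_lt_of_le h hle
      have := mul_pos (sub_pos.mpr h) (sub_pos.mpr h2)
      nlinarith [mul_pos hlt this]
    · have h2 : zetaMinus lam mu < s := lt_of_le_of_lt hle h
      have := mul_pos (sub_pos.mpr h) (sub_pos.mpr h2)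
      nlinarith [mul_pos hlt this]
  · intro s h1 h2
    rw [Dq_factor lam mu hlam hmu]
    have hn := mul_nonneg (mul_nonneg hlt.le (sub_nonneg.mpr h1)) (sub_nonneg.mpr h2)
    nlinarith [hn]
end
end

section
/- Let λ, μ, s, ξ, z be complex numbers such that (s+μ)ξ² + (μ² - λμ/2 + (μ-λ)s)ξ - λμs/2 = 0 and z = (s+ξ)/2. Then R(z - s, z) = 0, where R(w,z) = w³ - (λ-z)w² - (z+μ)²w - z(z+μ)(z+μ-λ). -/
noncomputable section

/-- The key cubic polynomial `R(w,z)` of the symmetric SQF model (complex version). -/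
def RcubC (lam mu w z : ℂ) : ℂ :=
  w ^ 3 - (lam - z) * w ^ 2 - (z + mu) ^ 2 * w - z * (z + mu) * (z + mu - lam)

theorem stmt_4 (lam mu s ξ z : ℂ)
    (hquad : (s + mu) * ξ ^ 2 + (mu ^ 2 - lam * mu / 2 + (mu - lam) * s) * ξ -
      lam * mu * s / 2 = 0)
    (hz : z = (s + ξ) / 2) :
    RcubC lam mu (z - s) z = 0 := by
  subst hz
  unfold RcubC
  linear_combination (-1 : ℂ) * hquad
end
end

section
/- Let 0 < λ < μ and z > 0. Then the cubic polynomial w ↦ R(w,z) has three distinct real roots α(z), β(z), γ(z) satisfying α(z) < -z < β(z) < 0 < γ(z). -/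
noncomputable section

/-- The key cubic polynomial `R(w,z)` of the symmetric SQF model. -/
def Rcub (lam mu w z : ℝ) : ℝ :=
  w ^ 3 - (lam - z) * w ^ 2 - (z + mu) ^ 2 * w - z * (z + mu) * (z + mu - lam)

theorem stmt_5 (lam mu z : ℝ) (hlam : 0 < lam) (hmu : lam < mu) (hz : 0 < z) :
    ∃ a b c : ℝ,
      Rcub lam mu a z = 0 ∧ Rcub lam mu b z = 0 ∧ Rcub lam mu c z = 0 ∧
      a < -z ∧ -z < b ∧ b < 0 ∧ 0 < c := by
  have hcont : Continuous fun w => Rcub lam mu w z := by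
    unfold Rcub; fun_prop
  have hmuz : 0 < z + mu - lam := by linarith
  have hmu0 : 0 < mu := lt_trans hlam hmu
  have h1 : Rcub lam mu (-(2 * z + mu)) z < 0 := by
    have : Rcub lam mu (-(2 * z + mu)) z =
        -((2 * z + mu) * (z * (z + mu) + lam * z + lam * (z + mu)))
          - z * (z + mu) * (z + mu - lam) := by unfold Rcub; ring
    rw [this]
    have : 0 < (2 * z + mu) * (z * (z + mu) + lam * z + lam * (z + mu)) := by positivity
    nlinarith [mul_pos (mul_pos hz (by linarith : (0:ℝ) < z + mu)) hmuz]
  have h2 : 0 < Rcub lam mu (-z) z := by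
    have : Rcub lam mu (-z) z = lam * z * mu := by unfold Rcub; ring
    rw [this]; positivity
  have h3 : Rcub lam mu 0 z < 0 := by
    have : Rcub lam mu 0 z = -(z * (z + mu) * (z + mu - lam)) := by unfold Rcub; ring
    rw [this]
    have : 0 < z * (z + mu) * (z + mu - lam) := by
      apply mul_pos (mul_pos hz (by linarith)) hmuz
    linarith
  have h4 : 0 < Rcub lam mu (lam + (z + mu)) z := by
    have : Rcub lam mu (lam + (z + mu)) z =
        lam ^ 2 * (z + mu) + lam ^ 2 * z + 3 * lam * (z + mu) * z + lam * (z + mu) ^ 2 := by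
      unfold Rcub; ring
    rw [this]; positivity
  -- root a in (-(2z+mu), -z)
  obtain ⟨a, ha, hRa⟩ := intermediate_value_Ioo (by nlinarith : -(2 * z + mu) ≤ -z)
    hcont.continuousOn (show (0:ℝ) ∈ Set.Ioo (Rcub lam mu (-(2*z+mu)) z) (Rcub lam mu (-z) z)
      from ⟨h1, h2⟩)
  obtain ⟨b, hb, hRb⟩ := intermediate_value_Ioo' (by linarith : -z ≤ (0:ℝ))
    hcont.continuousOn (show (0:ℝ) ∈ Set.Ioo (Rcub lam mu 0 z) (Rcub lam mu (-z) z)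
      from ⟨h3, h2⟩)
  obtain ⟨c, hc, hRc⟩ := intermediate_value_Ioo (by nlinarith : (0:ℝ) ≤ lam + (z + mu))
    hcont.continuousOn (show (0:ℝ) ∈ Set.Ioo (Rcub lam mu 0 z) (Rcub lam mu (lam+(z+mu)) z)
      from ⟨h3, h4⟩)
  exact ⟨a, b, c, hRa, hRb, hRc, ha.2, hb.1, hb.2, hc.1⟩
end
end

section
/- Let λ = μ/2 with μ > 0. Then δ(-μ/2) = μ⁵/4, and consequently the unique real root η₁ of δ lies in the open interval (-μ, -μ/2). -/
noncomputable section

/-- The cubic factor `δ(z)` of the discriminant of the key cubic `R(·,z)`. -/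
def deltaPoly (lam mu z : ℝ) : ℝ :=
  16 * (lam ^ 2 + mu ^ 2) * z ^ 3 -
    (16 * lam ^ 3 - 24 * lam ^ 2 * mu + 24 * lam * mu ^ 2 - 32 * mu ^ 3) * z ^ 2 +
    (4 * lam ^ 4 - 4 * lam ^ 3 * mu + 21 * lam ^ 2 * mu ^ 2 - 20 * lam * mu ^ 3 +
      20 * mu ^ 4) * z +
    lam ^ 2 * mu ^ 3 + 4 * mu ^ 5

theorem stmt_9 (lam mu : ℝ) (hmu : 0 < mu) (hlam : lam = mu / 2) :
    deltaPoly lam mu (-(mu / 2)) = mu ^ 5 / 4 ∧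
    ∃ η : ℝ, deltaPoly lam mu η = 0 ∧ (∀ z : ℝ, deltaPoly lam mu z = 0 → z = η) ∧
      -mu < η ∧ η < -(mu / 2) := by
  subst hlam
  set f : ℝ → ℝ := fun z => deltaPoly (mu / 2) mu z with hf
  have hfe : ∀ z, f z = 20 * mu ^ 2 * z ^ 3 + 24 * mu ^ 3 * z ^ 2 + 15 * mu ^ 4 * z
      + (17 / 4) * mu ^ 5 := by
    intro z; simp only [hf, deltaPoly]; ring
  have hmono : StrictMono f := by
    intro a b hab
    have h1 : f b - f a = (b - a) * (20 * mu ^ 2 * (a ^ 2 + a * b + b ^ 2)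
        + 24 * mu ^ 3 * (a + b) + 15 * mu ^ 4) := by
      rw [hfe a, hfe b]; ring
    have h2 : 0 < 20 * mu ^ 2 * (a ^ 2 + a * b + b ^ 2) + 24 * mu ^ 3 * (a + b)
        + 15 * mu ^ 4 := by
      nlinarith [sq_nonneg (10 * (a + b) + 12 * mu), sq_nonneg (a - b), sq_nonneg (a + b),
        sq_nonneg mu, mul_pos hmu hmu, sq_nonneg (mu * (a + b))]
    nlinarith [h1, h2, sub_pos.mpr hab]
  have hcont : ContinuousOn f (Set.Icc (-mu) (-(mu / 2))) := by
    apply Continuous.continuousOn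
    simp only [hf, deltaPoly]; fun_prop
  have hlt : -mu < -(mu / 2) := by linarith
  have hfneg : f (-mu) < 0 := by
    rw [hfe]; nlinarith [pow_pos hmu 5]
  have hfpos : 0 < f (-(mu / 2)) := by
    rw [hfe]; nlinarith [pow_pos hmu 5]
  have h0 : (0 : ℝ) ∈ Set.Ioo (f (-mu)) (f (-(mu / 2))) := ⟨hfneg, hfpos⟩
  have := intermediate_value_Ioo (le_of_lt hlt) hcont h0
  obtain ⟨η, hη, hηf⟩ := this
  refine ⟨?_, η, hηf, ?_, hη.1, hη.2⟩
  · simp only [deltaPoly]; ring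
  · intro z hz
    exact hmono.injective (hz.trans hηf.symm)
end
end

section
/- Let 0 < λ < μ and z > 0, and set s = z - α(z). Then s > 2z > 0, D(s) > 0, and ξ⁻(s) = z + α(z); equivalently, z = (s + ξ⁻(s))/2. -/
noncomputable section

/-- The branch `ξ⁺(s)` of the quadratic `(s+μ)ξ² + (μ²-λμ/2+(μ-λ)s)ξ - λμs/2 = 0`. -/
def xiPlus (lam mu s : ℝ) : ℝ :=
  (-(mu ^ 2 - lam * mu / 2 + (mu - lam) * s) + Real.sqrt (Dq lam mu s)) / (2 * (s + mu))

/-- The branch `ξ⁻(s)` of the quadratic `(s+μ)ξ² + (μ²-λμ/2+(μ-λ)s)ξ - λμs/2 = 0`. -/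
def xiMinus (lam mu s : ℝ) : ℝ :=
  (-(mu ^ 2 - lam * mu / 2 + (mu - lam) * s) - Real.sqrt (Dq lam mu s)) / (2 * (s + mu))

/-- `s(z) = z - α(z)`, given the branch `α` of the cubic. -/
def sfun (alpha : ℝ → ℝ) (z : ℝ) : ℝ := z - alpha z

/-- `h(z) = (s(z) + ξ⁺(s(z)))/2`, given the branch `α` of the cubic. -/
def hfun (lam mu : ℝ) (alpha : ℝ → ℝ) (z : ℝ) : ℝ :=
  (sfun alpha z + xiPlus lam mu (sfun alpha z)) / 2

theorem stmt_10 (lam mu z a : ℝ) (hlam : 0 < lam) (hmu : lam < mu) (hz : 0 < z)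
    (haroot : Rcub lam mu a z = 0) (halt : a < -z)
    (huniq : ∀ w : ℝ, Rcub lam mu w z = 0 → w < -z → w = a) :
    2 * z < z - a ∧ 0 < 2 * z ∧ 0 < Dq lam mu (z - a) ∧
    xiMinus lam mu (z - a) = z + a ∧ z = ((z - a) + xiMinus lam mu (z - a)) / 2 := by
  have hs2z : 2 * z < z - a := by linarith
  have hspos : 0 < z - a := by linarith
  have hxineg : z + a < 0 := by linarith
  have hApos : 0 < (z - a) + mu := by linarith
  have hCpos : 0 < lam * mu * (z - a) / 2 := by
    have := mul_pos (mul_pos hlam (hlam.trans hmu)) hspos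
    linarith
  have hQ : ((z - a) + mu) * (z + a) ^ 2
      + (mu ^ 2 - lam * mu / 2 + (mu - lam) * (z - a)) * (z + a)
      - lam * mu * (z - a) / 2 = 0 := by
    have hR := haroot
    simp only [Rcub] at hR
    linear_combination -hR
  have htsq : (2 * ((z - a) + mu) * (z + a)
      + (mu ^ 2 - lam * mu / 2 + (mu - lam) * (z - a))) ^ 2 = Dq lam mu (z - a) := by
    simp only [Dq]
    linear_combination (4 * ((z - a) + mu)) * hQ
  have hAB : ((z - a) + mu) * (z + a)
      + (mu ^ 2 - lam * mu / 2 + (mu - lam) * (z - a)) < 0 := by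
    by_contra h
    push_neg at h
    nlinarith [mul_nonpos_of_nonpos_of_nonneg hxineg.le h]
  have htneg : 2 * ((z - a) + mu) * (z + a)
      + (mu ^ 2 - lam * mu / 2 + (mu - lam) * (z - a)) < 0 := by
    nlinarith [mul_neg_of_pos_of_neg hApos hxineg]
  have hDpos : 0 < Dq lam mu (z - a) := by
    rw [← htsq]
    nlinarith [htneg]
  have hsqrt : Real.sqrt (Dq lam mu (z - a)) = -(2 * ((z - a) + mu) * (z + a)
      + (mu ^ 2 - lam * mu / 2 + (mu - lam) * (z - a))) := by
    rw [← htsq, Real.sqrt_sq_eq_abs, abs_of_neg htneg]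
  have hximinus : xiMinus lam mu (z - a) = z + a := by
    simp only [xiMinus, hsqrt]
    rw [div_eq_iff (by positivity : (2 : ℝ) * ((z - a) + mu) ≠ 0)]
    ring
  exact ⟨hs2z, by linarith, hDpos, hximinus, by rw [hximinus]; ring⟩
end
end

section
/- Let 0 < λ < μ. For every z > 0, the sequence of iterates z, h(z), h(h(z)), h(h(h(z))), … is strictly increasing and tends to +∞; in particular, h has no fixed point in (0,∞). -/
noncomputable section

lemma xiPlus_pos' {lam mu : ℝ} (hlam : 0 < lam) (hmu : lam < mu) {s : ℝ} (hs : 0 < s) :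
    0 < xiPlus lam mu s := by
  have hmu0 : 0 < mu := hlam.trans hmu
  have hC : 0 < 2 * lam * mu * s * (mu + s) := by positivity
  have hD : (mu ^ 2 - lam * mu / 2 + (mu - lam) * s) ^ 2 < Dq lam mu s := by
    unfold Dq; linarith
  have h1 : |mu ^ 2 - lam * mu / 2 + (mu - lam) * s| < Real.sqrt (Dq lam mu s) := by
    rw [← Real.sqrt_sq_eq_abs]
    exact Real.sqrt_lt_sqrt (sq_nonneg _) hD
  have h2 : mu ^ 2 - lam * mu / 2 + (mu - lam) * s < Real.sqrt (Dq lam mu s) :=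
    (le_abs_self _).trans_lt h1
  unfold xiPlus
  exact div_pos (by linarith) (by linarith)

lemma alpha_bounds' {lam mu : ℝ} (hlam : 0 < lam) (hmu : lam < mu)
    (alpha : ℝ → ℝ)
    (halpha : ∀ z : ℝ, 0 < z → Rcub lam mu (alpha z) z = 0 ∧ alpha z < -z ∧
      ∀ w : ℝ, Rcub lam mu w z = 0 → w < -z → w = alpha z)
    {z : ℝ} (hz : 0 < z) : -(z + mu) < alpha z ∧ alpha z < -z := by
  have hmu0 : 0 < mu := hlam.trans hmu
  obtain ⟨hroot, hlt, huniq⟩ := halpha z hz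
  refine ⟨?_, hlt⟩
  by_contra hle
  push_neg at hle
  have hcont : ContinuousOn (fun w => Rcub lam mu w z) (Set.Icc (-(z + mu)) (-z)) := by
    apply Continuous.continuousOn
    unfold Rcub
    fun_prop
  have hab : (-(z + mu)) ≤ -z := by linarith
  have hneg : Rcub lam mu (-(z + mu)) z = -(lam * mu * (z + mu)) := by
    unfold Rcub; ring
  have hpos : Rcub lam mu (-z) z = lam * mu * z := by
    unfold Rcub; ring
  have h0 : (0 : ℝ) ∈ Set.Ioo (Rcub lam mu (-(z + mu)) z) (Rcub lam mu (-z) z) := by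
    rw [hneg, hpos]
    constructor
    · have : 0 < lam * mu * (z + mu) := by positivity
      linarith
    · positivity
  obtain ⟨w, hw, hwz⟩ := intermediate_value_Ioo hab hcont h0
  have hwa : w = alpha z := huniq w hwz hw.2
  rw [hwa] at hw
  linarith [hw.1]

lemma hfun_gt' {lam mu : ℝ} (hlam : 0 < lam) (hmu : lam < mu)
    (alpha : ℝ → ℝ)
    (halpha : ∀ z : ℝ, 0 < z → Rcub lam mu (alpha z) z = 0 ∧ alpha z < -z ∧
      ∀ w : ℝ, Rcub lam mu w z = 0 → w < -z → w = alpha z)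
    {z : ℝ} (hz : 0 < z) : z < hfun lam mu alpha z := by
  obtain ⟨hl, hr⟩ := alpha_bounds' hlam hmu alpha halpha hz
  have hs : 2 * z < sfun alpha z := by unfold sfun; linarith
  have hspos : 0 < sfun alpha z := by linarith
  have hxi := xiPlus_pos' hlam hmu hspos
  unfold hfun
  linarith

theorem stmt_12 (lam mu : ℝ) (hlam : 0 < lam) (hmu : lam < mu)
    (alpha : ℝ → ℝ)
    (halpha : ∀ z : ℝ, 0 < z → Rcub lam mu (alpha z) z = 0 ∧ alpha z < -z ∧
      ∀ w : ℝ, Rcub lam mu w z = 0 → w < -z → w = alpha z) :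
    ∀ z : ℝ, 0 < z →
      StrictMono (fun k : ℕ => (hfun lam mu alpha)^[k] z) ∧
      Filter.Tendsto (fun k : ℕ => (hfun lam mu alpha)^[k] z) Filter.atTop Filter.atTop ∧
      hfun lam mu alpha z ≠ z := by
  intro z hz
  have hmu0 : 0 < mu := hlam.trans hmu
  set h := hfun lam mu alpha with hh
  set u : ℕ → ℝ := fun k => h^[k] z with hu
  have hiter : ∀ k, u (k + 1) = h (u k) := fun k => Function.iterate_succ_apply' h k z
  have hge : ∀ k, z ≤ u k := by
    intro k
    induction k with
    | zero => simp [hu]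
    | succ k ih =>
      rw [hiter k]
      have hpos : 0 < u k := lt_of_lt_of_le hz ih
      exact ih.trans (hfun_gt' hlam hmu alpha halpha hpos).le
  have hstep : ∀ k, u k < u (k + 1) := by
    intro k
    rw [hiter k]
    exact hfun_gt' hlam hmu alpha halpha (lt_of_lt_of_le hz (hge k))
  have hmono : StrictMono u := strictMono_nat_of_lt_succ hstep
  refine ⟨hmono, ?_, (hfun_gt' hlam hmu alpha halpha hz).ne'⟩
  apply Filter.tendsto_atTop_atTop_of_monotone' hmono.monotone
  rintro ⟨M, hM⟩
  have hMz : z ≤ M := hM (Set.mem_range_self 0)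
  set K := Set.Icc (2 * z) (2 * M + mu) with hK
  have hKc : IsCompact K := isCompact_Icc
  have hKne : K.Nonempty := Set.nonempty_Icc.mpr (by linarith)
  have hcont : ContinuousOn (xiPlus lam mu) K := by
    unfold xiPlus
    apply ContinuousOn.div
    · apply Continuous.continuousOn
      apply Continuous.add
      · fun_prop
      · exact (Real.continuous_sqrt.comp (by unfold Dq; fun_prop))
    · apply Continuous.continuousOn; fun_prop
    · intro x hx
      have h1 : 2 * z ≤ x := hx.1
      have : 0 < 2 * (x + mu) := by linarith
      exact this.ne'
  obtain ⟨x0, hx0K, hx0min⟩ := hKc.exists_isMinOn hKne hcont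
  set δ := xiPlus lam mu x0 with hδdef
  have hx0pos : 0 < x0 := lt_of_lt_of_le (by linarith) hx0K.1
  have hδ : 0 < δ := xiPlus_pos' hlam hmu hx0pos
  have step : ∀ k, u k + δ / 2 ≤ u (k + 1) := by
    intro k
    have huk : z ≤ u k := hge k
    have hukM : u k ≤ M := hM (Set.mem_range_self k)
    have hukpos : 0 < u k := lt_of_lt_of_le hz huk
    obtain ⟨hl, hr⟩ := alpha_bounds' hlam hmu alpha halpha hukpos
    have hs2 : 2 * u k < sfun alpha (u k) := by unfold sfun; linarith
    have hsK : sfun alpha (u k) ∈ K := by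
      constructor
      · linarith
      · unfold sfun; linarith
    have hξ : δ ≤ xiPlus lam mu (sfun alpha (u k)) := hx0min hsK
    rw [hiter k]
    show u k + δ / 2 ≤ hfun lam mu alpha (u k)
    unfold hfun
    linarith
  have lower : ∀ k : ℕ, z + k * (δ / 2) ≤ u k := by
    intro k
    induction k with
    | zero => simp [hu]
    | succ k ih =>
      have := step k
      push_cast
      linarith
  obtain ⟨k, hk⟩ := exists_nat_gt ((M - z) / (δ / 2))
  have h1 : z + k * (δ / 2) ≤ u k := lower k
  have h2 : u k ≤ M := hM (Set.mem_range_self k)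
  have h3 : M - z < k * (δ / 2) := (div_lt_iff₀ (half_pos hδ)).mp hk
  linarith
end
end

section
/- Let 0 < λ < μ. Then q(z) → r as z → +∞, where r = (λ + μ - √(λ²+μ²))/(λ + μ + √(λ²+μ²)), and 0 < r < 1. -/
noncomputable section

/-- `q(z) = (μ + ξ⁻)/(μ + ξ⁺(s(z)))` where `ξ⁻ = z + α(z)`. -/
def qfun (lam mu : ℝ) (alpha : ℝ → ℝ) (z : ℝ) : ℝ :=
  (mu + (z + alpha z)) / (mu + xiPlus lam mu (sfun alpha z))

/-- `L(z) = (1-λ/μ)·s(z)·(ξ⁺(s(z)) - ξ⁻)/((s(z)-ξ⁺(s(z)))·(s(z)-ξ⁻))·(μ+ξ⁻)/μ`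
where `ξ⁻ = z + α(z)`. -/
def Lfun (lam mu : ℝ) (alpha : ℝ → ℝ) (z : ℝ) : ℝ :=
  (1 - lam / mu) * sfun alpha z * (xiPlus lam mu (sfun alpha z) - (z + alpha z)) /
      ((sfun alpha z - xiPlus lam mu (sfun alpha z)) * (sfun alpha z - (z + alpha z))) *
    (mu + (z + alpha z)) / mu

open Filter Real

lemma Rcub_shift (lam mu v z : ℝ) :
    Rcub lam mu (v - z) z =
      z * (-2*v^2 + 2*(lam-mu)*v + lam*mu) + (v^3 - lam*v^2 - mu^2*v) := by
  unfold Rcub; ring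

set_option maxHeartbeats 1000000 in
lemma alpha_lim (lam mu : ℝ) (hlam : 0 < lam) (hmu : lam < mu)
    (alpha : ℝ → ℝ)
    (halpha : ∀ z : ℝ, 0 < z → Rcub lam mu (alpha z) z = 0 ∧ alpha z < -z ∧
      ∀ w : ℝ, Rcub lam mu w z = 0 → w < -z → w = alpha z) :
    Tendsto (fun z : ℝ => z + alpha z) atTop
      (nhds ((lam - mu - Real.sqrt (lam^2+mu^2))/2)) := by
  set S := Real.sqrt (lam^2+mu^2) with hS
  have hS2 : S^2 = lam^2 + mu^2 := Real.sq_sqrt (by positivity)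
  have hSpos : 0 < S := Real.sqrt_pos.2 (by positivity)
  set vm : ℝ := (lam - mu - S)/2 with hvm
  set vp : ℝ := (lam - mu + S)/2 with hvp
  have hvmneg : vm < 0 := by
    have : lam - mu < 0 := by linarith
    rw [hvm]; linarith
  have hvppos : 0 < vp := by
    have h1 : (mu - lam) < S := by
      have : (mu - lam)^2 < S^2 := by nlinarith
      nlinarith
    rw [hvp]; linarith
  have key : ∀ v : ℝ, -2*v^2 + 2*(lam-mu)*v + lam*mu = -2*(v - vm)*(v - vp) := by
    intro v
    rw [hvm, hvp]
    linear_combination (-(1:ℝ)/2) * hS2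
  rw [Metric.tendsto_nhds]
  intro ε hε
  set δ : ℝ := min (ε/2) (-vm/2) with hδ
  have hδpos : 0 < δ := lt_min (by linarith) (by linarith)
  have hδε : δ < ε := lt_of_le_of_lt (min_le_left _ _) (by linarith)
  have hδvm : δ < -vm := lt_of_le_of_lt (min_le_right _ _) (by linarith)
  set ga : ℝ := -2*(vm+δ)^2 + 2*(lam-mu)*(vm+δ) + lam*mu with hga
  set gb : ℝ := -2*(vm-δ)^2 + 2*(lam-mu)*(vm-δ) + lam*mu with hgb
  have hgapos : 0 < ga := by
    rw [hga, key]
    have h1 : vm + δ - vp < 0 := by linarith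
    nlinarith
  have hgbneg : gb < 0 := by
    rw [hgb, key]
    nlinarith
  set pa : ℝ := (vm+δ)^3 - lam*(vm+δ)^2 - mu^2*(vm+δ) with hpa
  set pb : ℝ := (vm-δ)^3 - lam*(vm-δ)^2 - mu^2*(vm-δ) with hpb
  have hA : Tendsto (fun z : ℝ => z * ga + pa) atTop atTop :=
    tendsto_atTop_add_const_right _ pa (Tendsto.atTop_mul_const hgapos tendsto_id)
  have hB : Tendsto (fun z : ℝ => z * (-gb) + (-pb)) atTop atTop :=
    tendsto_atTop_add_const_right _ (-pb) (Tendsto.atTop_mul_const (by linarith) tendsto_id)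
  filter_upwards [hA.eventually_gt_atTop 0, hB.eventually_gt_atTop 0,
    eventually_gt_atTop (0:ℝ)] with z hz1 hz2 hz0
  set F : ℝ → ℝ := fun v => z*(-2*v^2 + 2*(lam-mu)*v + lam*mu) + (v^3 - lam*v^2 - mu^2*v)
    with hF
  have hFcont : Continuous F := by fun_prop
  have hFa : F (vm - δ) ≤ 0 := by
    have : F (vm - δ) = z * gb + pb := by rw [hF, hgb, hpb]
    rw [this]; nlinarith
  have hFb : 0 ≤ F (vm + δ) := by
    have : F (vm + δ) = z * ga + pa := by rw [hF, hga, hpa]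
    rw [this]; nlinarith
  have hsub : Set.Icc (F (vm - δ)) (F (vm + δ)) ⊆ F '' Set.Icc (vm - δ) (vm + δ) :=
    intermediate_value_Icc (by linarith) hFcont.continuousOn
  obtain ⟨v₀, hv₀mem, hv₀⟩ := hsub ⟨hFa, hFb⟩
  have hv₀lt : v₀ < 0 := lt_of_le_of_lt hv₀mem.2 (by linarith)
  have hroot : Rcub lam mu (v₀ - z) z = 0 := by rw [Rcub_shift]; exact hv₀
  have hwlt : v₀ - z < -z := by linarith
  have := (halpha z hz0).2.2 (v₀ - z) hroot hwlt
  have hval : z + alpha z = v₀ := by rw [← this]; ring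
  rw [hval, Real.dist_eq]
  have h1 := hv₀mem.1
  have h2 := hv₀mem.2
  rw [abs_lt]
  constructor <;> linarith

set_option maxHeartbeats 1000000 in
lemma xiPlus_lim (lam mu : ℝ) (hlam : 0 < lam) (hmu : lam < mu) :
    Tendsto (fun s : ℝ => xiPlus lam mu s) atTop
      (nhds ((lam - mu + Real.sqrt (lam^2+mu^2))/2)) := by
  have hmupos : 0 < mu := lt_trans hlam hmu
  set c : ℝ := mu^2 - lam*mu/2 with hc
  set G : ℝ → ℝ := fun s =>
    (-(c/s + (mu-lam)) + Real.sqrt ((c/s + (mu-lam))^2 + 2*lam*mu*(mu/s + 1))) /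
      (2*(1 + mu/s)) with hG
  have heq : ∀ᶠ s in atTop, xiPlus lam mu s = G s := by
    filter_upwards [eventually_gt_atTop (0:ℝ)] with s hs
    have hD : Dq lam mu s = s^2 * ((c/s + (mu-lam))^2 + 2*lam*mu*(mu/s + 1)) := by
      unfold Dq
      rw [hc]
      field_simp
    have hsqrt : Real.sqrt (Dq lam mu s)
        = s * Real.sqrt ((c/s + (mu-lam))^2 + 2*lam*mu*(mu/s + 1)) := by
      rw [hD, Real.sqrt_mul (by positivity), Real.sqrt_sq hs.le]
    rw [hG]
    simp only
    unfold xiPlus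
    rw [hsqrt]
    set X := Real.sqrt ((c/s + (mu-lam))^2 + 2*lam*mu*(mu/s + 1)) with hX
    rw [div_eq_div_iff (by positivity) (by positivity)]
    have : mu ^ 2 - lam * mu / 2 = c := by rw [hc]
    rw [this]
    field_simp
  have h0 : Tendsto (fun s : ℝ => c/s) atTop (nhds 0) :=
    Tendsto.div_atTop tendsto_const_nhds tendsto_id
  have h0' : Tendsto (fun s : ℝ => mu/s) atTop (nhds 0) :=
    Tendsto.div_atTop tendsto_const_nhds tendsto_id
  have hnum : Tendsto (fun s : ℝ =>
      -(c/s + (mu-lam)) + Real.sqrt ((c/s + (mu-lam))^2 + 2*lam*mu*(mu/s + 1))) atTop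
      (nhds (-(0 + (mu-lam)) + Real.sqrt ((0 + (mu-lam))^2 + 2*lam*mu*(0 + 1)))) := by
    exact ((h0.add_const (mu-lam)).neg).add
      ((((h0.add_const (mu-lam)).pow 2).add ((h0'.add_const 1).const_mul (2*lam*mu))).sqrt)
  have hden : Tendsto (fun s : ℝ => 2*(1 + mu/s)) atTop (nhds (2*(1+0))) :=
    (h0'.const_add 1).const_mul 2
  have hGlim := hnum.div hden (by norm_num)
  have hval : (-(0 + (mu-lam)) + Real.sqrt ((0 + (mu-lam))^2 + 2*lam*mu*(0 + 1))) / (2*(1+0))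
      = (lam - mu + Real.sqrt (lam^2+mu^2))/2 := by
    rw [show ((0:ℝ) + (mu-lam))^2 + 2*lam*mu*(0 + 1) = lam^2 + mu^2 from by ring]
    ring
  rw [hval] at hGlim
  exact hGlim.congr' (heq.mono fun s h => h.symm)

theorem stmt_14 (lam mu : ℝ) (hlam : 0 < lam) (hmu : lam < mu)
    (alpha : ℝ → ℝ)
    (halpha : ∀ z : ℝ, 0 < z → Rcub lam mu (alpha z) z = 0 ∧ alpha z < -z ∧
      ∀ w : ℝ, Rcub lam mu w z = 0 → w < -z → w = alpha z) :
    Filter.Tendsto (fun z : ℝ => qfun lam mu alpha z) Filter.atTop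
      (nhds ((lam + mu - Real.sqrt (lam ^ 2 + mu ^ 2)) /
        (lam + mu + Real.sqrt (lam ^ 2 + mu ^ 2)))) ∧
    0 < (lam + mu - Real.sqrt (lam ^ 2 + mu ^ 2)) /
        (lam + mu + Real.sqrt (lam ^ 2 + mu ^ 2)) ∧
    (lam + mu - Real.sqrt (lam ^ 2 + mu ^ 2)) /
        (lam + mu + Real.sqrt (lam ^ 2 + mu ^ 2)) < 1 := by
  have hmupos : 0 < mu := lt_trans hlam hmu
  set S := Real.sqrt (lam^2+mu^2) with hS
  have hS2 : S^2 = lam^2 + mu^2 := Real.sq_sqrt (by positivity)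
  have hSpos : 0 < S := Real.sqrt_pos.2 (by positivity)
  have hSlt : S < lam + mu := by
    have : S^2 < (lam+mu)^2 := by nlinarith
    nlinarith
  refine ⟨?_, div_pos (by linarith) (by linarith), ?_⟩
  · have hva := alpha_lim lam mu hlam hmu alpha halpha
    have hsfun : Tendsto (sfun alpha) atTop atTop := by
      have heq : sfun alpha = fun z => -(z + alpha z) + 2*z := by
        funext z; unfold sfun; ring
      rw [heq]
      exact Tendsto.add_atTop hva.neg
        (Tendsto.const_mul_atTop (by norm_num : (0:ℝ) < 2) tendsto_id)
    have hxi := (xiPlus_lim lam mu hlam hmu).comp hsfun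
    have hden_ne : mu + (lam - mu + S)/2 ≠ 0 := by
      have : 0 < mu + (lam - mu + S)/2 := by nlinarith
      linarith
    have hq := (hva.const_add mu).div (hxi.const_add mu) hden_ne
    have hval : (mu + (lam - mu - S)/2) / (mu + (lam - mu + S)/2)
        = (lam + mu - S) / (lam + mu + S) := by
      rw [div_eq_div_iff hden_ne (by linarith)]
      ring
    rw [hval] at hq
    exact hq.congr fun z => by simp [qfun]
  · rw [div_lt_one (by linarith)]
    linarith
end
end

section
/- Let μ/2 < λ < μ. Then the function s ↦ ξ⁺(s) is differentiable at s = λ - μ and its derivative there equals μ/(2λ-μ), i.e. ξ⁺′(λ-μ) = 1/(2ϱ-1) with ϱ = λ/μ. -/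
noncomputable section

/-!
Differentiating the quadratic `(s+μ)ξ² + (μ² - λμ/2 + (μ-λ)s)ξ - λμs/2 = 0` implicitly, its
`ξ`-derivative at `ξ⁺(s)` is `√D(s)` and its `s`-derivative is `ξ² + (μ-λ)ξ - λμ/2`, so
`ξ⁺'(s) = -(ξ⁺(s)² + (μ-λ)ξ⁺(s) - λμ/2) / √D(s)` wherever `D(s) > 0`. At `s = λ - μ` one has
`√D = λ(λ - μ/2)` and `ξ⁺ = λ - μ`, so the numerator is `-λμ/2` and the derivative is `μ/(2λ-μ)`.
-/

theorem hasDerivAt_Dq (lam mu s : ℝ) :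
    HasDerivAt (Dq lam mu)
      (2 * (mu ^ 2 - lam * mu / 2 + (mu - lam) * s) * (mu - lam)
        + 2 * lam * mu * (mu + 2 * s)) s := by
  have hB : HasDerivAt (fun s => mu ^ 2 - lam * mu / 2 + (mu - lam) * s) (mu - lam) s := by
    simpa using ((hasDerivAt_id s).const_mul (mu - lam)).const_add (mu ^ 2 - lam * mu / 2)
  have hC : HasDerivAt (fun s => 2 * lam * mu * s * (mu + s)) (2 * lam * mu * (mu + 2 * s)) s :=
    (((hasDerivAt_id' s).const_mul (2 * lam * mu)).mul
      ((hasDerivAt_id' s).const_add mu)).congr_deriv (by ring)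
  exact ((hB.pow 2).add hC).congr_deriv (by simp only [Nat.cast_ofNat]; ring)

theorem hasDerivAt_xiPlus {lam mu s : ℝ} (hD : 0 < Dq lam mu s) (hs : s + mu ≠ 0) :
    HasDerivAt (xiPlus lam mu)
      (-(xiPlus lam mu s ^ 2 + (mu - lam) * xiPlus lam mu s - lam * mu / 2)
        / Real.sqrt (Dq lam mu s)) s := by
  have hB : HasDerivAt (fun s => mu ^ 2 - lam * mu / 2 + (mu - lam) * s) (mu - lam) s := by
    simpa using ((hasDerivAt_id s).const_mul (mu - lam)).const_add (mu ^ 2 - lam * mu / 2)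
  have ha : HasDerivAt (fun s => 2 * (s + mu)) 2 s := by
    simpa using ((hasDerivAt_id s).add_const mu).const_mul 2
  refine ((hB.neg.add ((hasDerivAt_Dq lam mu s).sqrt hD.ne')).div ha
    (by simpa using hs)).congr_deriv ?_
  have hr : 0 < Real.sqrt (Dq lam mu s) := Real.sqrt_pos.mpr hD
  have hrr : Real.sqrt (Dq lam mu s) ^ 2 = Dq lam mu s := Real.sq_sqrt hD.le
  simp only [Pi.add_apply, Pi.neg_apply, xiPlus]
  set r := Real.sqrt (Dq lam mu s)
  unfold Dq at hrr
  field_simp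
  linear_combination (-4) * hrr

theorem Dq_lam_sub_mu (lam mu : ℝ) : Dq lam mu (lam - mu) = (lam * (lam - mu / 2)) ^ 2 := by
  unfold Dq
  ring

theorem sqrt_Dq_lam_sub_mu {lam mu : ℝ} (hlam : 0 < lam) (hload : mu / 2 < lam) :
    Real.sqrt (Dq lam mu (lam - mu)) = lam * (lam - mu / 2) := by
  rw [Dq_lam_sub_mu, Real.sqrt_sq (mul_pos hlam (by linarith)).le]

theorem xiPlus_lam_sub_mu {lam mu : ℝ} (hlam : 0 < lam) (hload : mu / 2 < lam) :
    xiPlus lam mu (lam - mu) = lam - mu := by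
  rw [xiPlus, sqrt_Dq_lam_sub_mu hlam hload, sub_add_cancel]
  field_simp
  ring

theorem stmt_19_general (lam mu : ℝ) (hlam : 0 < lam)
    (hload : mu / 2 < lam) :
    HasDerivAt (fun s : ℝ => xiPlus lam mu s) (mu / (2 * lam - mu)) (lam - mu) := by
  have hq : 0 < lam * (lam - mu / 2) := mul_pos hlam (by linarith)
  have hD : 0 < Dq lam mu (lam - mu) := by
    rw [Dq_lam_sub_mu]
    positivity
  refine (hasDerivAt_xiPlus hD (by simpa using hlam.ne')).congr_deriv ?_
  rw [xiPlus_lam_sub_mu hlam hload, sqrt_Dq_lam_sub_mu hlam hload]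
  have h2 : 2 * lam - mu ≠ 0 := by linarith
  field_simp
  ring

theorem stmt_19 (lam mu : ℝ) (hlam : 0 < lam) (hmu : lam < mu)
    (hload : mu / 2 < lam) :
    HasDerivAt (fun s : ℝ => xiPlus lam mu s) (mu / (2 * lam - mu)) (lam - mu) :=
  stmt_19_general lam mu hlam hload
end
end
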